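/- Suppose F(·,x,a) has bounded variation along x̄ uniformly over A, let δ̄>0 satisfy η^δ̄(T) < ∞, and assume (C1) and (C2). Then there exists a countable set 𝒜 ⊂ (S,T) such that for every t ∈ (S,T)∖𝒜, lim_{t'→t} sup{ d_H(F(t',x,a), F(t,x,a)) : x ∈ x̄(t)+δ̄𝔹, a ∈ A } = 0. -/

import Mathlib

open Set Metric Filter MeasureTheory Pointwise
open scoped ENNReal Topology

noncomputable section

/-- Euclidean `n`-space `ℝⁿ`. -/
abbrev En (n : ℕ) : Type := EuclideanSpace ℝ (Fin n)

/-- A partition `{t₀ = S, t₁, …, t_N = t}` of the interval `[S, t]`. -/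
structure IntervalPartition (S t : ℝ) where
  N : ℕ
  pts : ℕ → ℝ
  hN : 0 < N
  first : pts 0 = S
  last : pts N = t
  mono : ∀ i, i < N → pts i < pts (i + 1)

/-- `diam(𝒯) ≤ ε` : every subinterval of the partition has length at most `ε`. -/
def IntervalPartition.diamLE {S t : ℝ} (P : IntervalPartition S t) (ε : ℝ) : Prop :=
  ∀ i, i < P.N → P.pts (i + 1) - P.pts i ≤ ε

/-- The sum `I^δ(𝒯) = Σᵢ sup { d_H(F(tᵢ₊₁,x,a), F(tᵢ,x,a)) :
x ∈ x̄([tᵢ,tᵢ₊₁]) + δ𝔹, a ∈ A }` for a multifunction `F` along `x̄`, uniformly over `A`. -/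
noncomputable def mvSum {n k : ℕ} (F : ℝ → En n → En k → Set (En n))
    (xbar : ℝ → En n) (A : Set (En k)) (δ : ℝ) {S t : ℝ} (P : IntervalPartition S t) : ℝ≥0∞ :=
  ∑ i ∈ Finset.range P.N,
    ⨆ x ∈ xbar '' Set.Icc (P.pts i) (P.pts (i + 1)) + Metric.closedBall (0 : En n) δ,
      ⨆ a ∈ A, EMetric.hausdorffEdist (F (P.pts (i + 1)) x a) (F (P.pts i) x a)

/-- The `(δ,ε)`-perturbed cumulative variation function `η^δ_ε(t)`:
the supremum of `I^δ(𝒯)` over partitions `𝒯` of `[S,t]` with `diam(𝒯) ≤ ε`.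
(For `t = S` there are no partitions and the value is `0`.) -/
noncomputable def mvEtaEps {n k : ℕ} (F : ℝ → En n → En k → Set (En n))
    (xbar : ℝ → En n) (A : Set (En k)) (δ ε : ℝ) (S t : ℝ) : ℝ≥0∞ :=
  ⨆ (P : IntervalPartition S t) (_ : P.diamLE ε), mvSum F xbar A δ P

/-- The `δ`-perturbed cumulative variation function `η^δ(t) = lim_{ε↓0} η^δ_ε(t)`
(the limit of the decreasing-in-`ε` family equals the infimum). -/
noncomputable def mvEtaDelta {n k : ℕ} (F : ℝ → En n → En k → Set (En n))
    (xbar : ℝ → En n) (A : Set (En k)) (δ : ℝ) (S t : ℝ) : ℝ≥0∞ :=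
  ⨅ (ε : ℝ) (_ : 0 < ε), mvEtaEps F xbar A δ ε S t

/-- The cumulative variation function `η(t) = lim_{δ↓0} η^δ(t)`. -/
noncomputable def mvEta {n k : ℕ} (F : ℝ → En n → En k → Set (En n))
    (xbar : ℝ → En n) (A : Set (En k)) (S t : ℝ) : ℝ≥0∞ :=
  ⨅ (δ : ℝ) (_ : 0 < δ), mvEtaDelta F xbar A δ S t

/-- `F(·,x,a)` has bounded variation along `x̄` uniformly over `A` : `η(T) < ∞`. -/
def HasBVAlongUniformly {n k : ℕ} (F : ℝ → En n → En k → Set (En n))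
    (xbar : ℝ → En n) (A : Set (En k)) (S T : ℝ) : Prop :=
  mvEta F xbar A S T < ⊤

/-- Hypothesis (C1): nonempty closed values, measurability in `t` (Castaing-type
characterization via distance functions), and uniform boundedness near `x̄`. -/
def HypC1 {n k : ℕ} (F : ℝ → En n → En k → Set (En n))
    (xbar : ℝ → En n) (A : Set (En k)) (S T δbar : ℝ) : Prop :=
  (∀ t ∈ Set.Icc S T, ∀ x : En n, ∀ a ∈ A, (F t x a).Nonempty ∧ IsClosed (F t x a)) ∧
  (∀ x : En n, ∀ a ∈ A, ∀ v : En n,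
      Measurable fun t : ℝ => EMetric.infEdist v (F t x a)) ∧
  (∃ c : ℝ, 0 < c ∧ ∀ t ∈ Set.Icc S T, ∀ x ∈ Metric.closedBall (xbar t) δbar, ∀ a ∈ A,
      F t x a ⊆ Metric.closedBall (0 : En n) c)

/-- Hypothesis (C2): uniform continuity of `(x,a) ↦ F(t,x,a)` near `x̄`,
with a modulus of continuity `γ`. -/
def HypC2 {n k : ℕ} (F : ℝ → En n → En k → Set (En n))
    (xbar : ℝ → En n) (A : Set (En k)) (S T δbar : ℝ) : Prop :=
  ∃ γ : ℝ → ℝ, (∀ s, 0 ≤ γ s) ∧ Tendsto γ (𝓝[>] (0 : ℝ)) (𝓝 0) ∧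
    ∀ t ∈ Set.Icc S T, ∀ x ∈ Metric.closedBall (xbar t) δbar,
      ∀ x' ∈ Metric.closedBall (xbar t) δbar, ∀ a ∈ A, ∀ a' ∈ A,
        F t x a ⊆ F t x' a' + Metric.closedBall (0 : En n) (γ (‖x - x'‖ + ‖a - a'‖))

/-- The Kuratowski upper limit of a family of sets along a filter `l`. -/
def kLimsup {α : Type*} [PseudoEMetricSpace α] (l : Filter ℝ) (G : ℝ → Set α) : Set α :=
  {v | ∀ ε : ℝ≥0∞, 0 < ε → ∃ᶠ s in l, EMetric.infEdist v (G s) < ε}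

/-- The Kuratowski lower limit of a family of sets along a filter `l`. -/
def kLiminf {α : Type*} [PseudoEMetricSpace α] (l : Filter ℝ) (G : ℝ → Set α) : Set α :=
  {v | Tendsto (fun s => EMetric.infEdist v (G s)) l (𝓝 0)}

/-- The set-valued limit along `l` exists: upper and lower Kuratowski limits coincide. -/
def KLimExists {α : Type*} [PseudoEMetricSpace α] (l : Filter ℝ) (G : ℝ → Set α) : Prop :=
  kLimsup l G = kLiminf l G

/-- The set-valued right limit `F(s̄⁺, x, a) = lim_{s ↓ s̄} F(s,x,a)` (with `s ∈ (s̄,T]`). -/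
def rightLim {n k : ℕ} (F : ℝ → En n → En k → Set (En n)) (T sbar : ℝ)
    (x : En n) (a : En k) : Set (En n) :=
  kLiminf (𝓝[Set.Ioc sbar T] sbar) fun s => F s x a

/-- The set-valued left limit `F(t̄⁻, x, a) = lim_{t ↑ t̄} F(t,x,a)` (with `t ∈ [S,t̄)`). -/
def leftLim {n k : ℕ} (F : ℝ → En n → En k → Set (En n)) (S tbar : ℝ)
    (x : En n) (a : En k) : Set (En n) :=
  kLiminf (𝓝[Set.Ico S tbar] tbar) fun s => F s x a

/-!
Fix a mesh `ε > 0` with `η^δ̄_ε(T) < ∞`. Appending an interval `[s, t]` of length at most `ε` to a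
partition of `[S, s]` of mesh at most `ε` shows `η^δ̄_ε(s) + gap(s, t) ≤ η^δ̄_ε(t)`, where `gap(s, t)`
is the supremum of `d_H(F(t,x,a), F(s,x,a))` over the tube `x̄([s, t]) + δ̄𝔹`. Hence `η^δ̄_ε` is
nondecreasing, and for `t'` close to `t` the quantity in the theorem is bounded by
`|η^δ̄_ε(t') - η^δ̄_ε(t)|`. It therefore tends to `0` at every continuity point of `η^δ̄_ε`,
and a monotone function has only countably many discontinuities.
-/

lemma monotoneOn_Ici_of_le_of_sub_le {β : Type*} [Preorder β] {f : ℝ → β} {S ε : ℝ}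
    (hε : 0 < ε) (h : ∀ s t, S ≤ s → s ≤ t → t - s ≤ ε → f s ≤ f t) :
    MonotoneOn f (Ici S) := by
  intro s (hs : S ≤ s) t _ hst
  obtain ⟨m, hm⟩ := exists_nat_ge ((t - s) / ε)
  rw [div_le_iff₀ hε] at hm
  induction m generalizing t with
  | zero => exact h s t hs hst (by rw [Nat.cast_zero, zero_mul] at hm; linarith)
  | succ m ih =>
    by_cases hts : t - s ≤ ε
    · exact h s t hs hst hts
    · push_cast at hm
      have hle : f s ≤ f (t - ε) := ih (mem_Ici.2 (by linarith)) (by linarith) (by linarith)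
      exact hle.trans (h _ t (by linarith) (by linarith) (by linarith))

lemma ENNReal.tendsto_sub_add_sub_of_continuousWithinAt {α : Type*} [TopologicalSpace α]
    {f : α → ℝ≥0∞} {s : Set α} {t : α} (hf : ContinuousWithinAt f s t) (ht : f t ≠ ⊤) :
    Tendsto (fun t' => (f t' - f t) + (f t - f t')) (𝓝[s] t) (𝓝 0) := by
  simpa using (ENNReal.Tendsto.sub hf (tendsto_const_nhds (x := f t)) (Or.inl ht)).add
    (ENNReal.Tendsto.sub tendsto_const_nhds hf (Or.inl ht))

namespace IntervalPartition

variable {S s t : ℝ}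

lemma pts_zero_le (P : IntervalPartition S t) : ∀ j ≤ P.N, P.pts 0 ≤ P.pts j
  | 0, _ => le_rfl
  | j + 1, hj => (P.pts_zero_le j (by omega)).trans (P.mono j (by omega)).le

lemma left_lt_right (P : IntervalPartition S t) : S < t := by
  obtain ⟨m, hm⟩ := Nat.exists_eq_succ_of_ne_zero P.hN.ne'
  calc S = P.pts 0 := P.first.symm
    _ ≤ P.pts m := P.pts_zero_le m (by omega)
    _ < P.pts (m + 1) := P.mono m (by omega)
    _ = t := by rw [← Nat.succ_eq_add_one, ← hm, P.last]

instance : IsEmpty (IntervalPartition S S) :=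
  ⟨fun P => P.left_lt_right.false⟩

def single (h : S < t) : IntervalPartition S t where
  N := 1
  pts i := if i = 0 then S else t
  hN := one_pos
  first := if_pos rfl
  last := if_neg one_ne_zero
  mono i hi := by
    obtain rfl : i = 0 := Nat.lt_one_iff.1 hi
    simpa using h

lemma diamLE_single {ε : ℝ} (h : S < t) (hts : t - S ≤ ε) : (single h).diamLE ε := by
  intro i hi
  obtain rfl : i = 0 := Nat.lt_one_iff.1 hi
  simpa [single] using hts

def extend (P : IntervalPartition S s) (h : s < t) : IntervalPartition S t where
  N := P.N + 1
  pts i := if i ≤ P.N then P.pts i else t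
  hN := Nat.succ_pos _
  first := by simp [P.first]
  last := by simp
  mono i hi := by
    rcases Nat.lt_or_ge i P.N with hlt | hge
    · simpa [hlt.le, Nat.succ_le_of_lt hlt] using P.mono i hlt
    · obtain rfl : i = P.N := by omega
      simpa [P.last] using h

lemma extend_pts_of_le (P : IntervalPartition S s) (h : s < t) {i : ℕ} (hi : i ≤ P.N) :
    (P.extend h).pts i = P.pts i :=
  if_pos hi

lemma extend_pts_succ_N (P : IntervalPartition S s) (h : s < t) :
    (P.extend h).pts (P.N + 1) = t :=
  if_neg (Nat.not_succ_le_self P.N)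

lemma diamLE_extend {ε : ℝ} {P : IntervalPartition S s} (hP : P.diamLE ε) (h : s < t)
    (hts : t - s ≤ ε) : (P.extend h).diamLE ε := by
  intro i hi
  rcases Nat.lt_or_ge i P.N with hlt | hge
  · rw [P.extend_pts_of_le h hlt, P.extend_pts_of_le h hlt.le]
    exact hP i hlt
  · obtain rfl : i = P.N := by change i < P.N + 1 at hi; omega
    rwa [P.extend_pts_succ_N h, P.extend_pts_of_le h le_rfl, P.last]

def uniform (h : s < t) (m : ℕ) (hm : 0 < m) : IntervalPartition s t where
  N := m
  pts i := s + i * ((t - s) / m)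
  hN := hm
  first := by simp
  last := by field_simp; ring
  mono i _ := by
    have : 0 < (t - s) / m := div_pos (by linarith) (by exact_mod_cast hm)
    push_cast
    linarith

lemma exists_diamLE (h : s < t) {ε : ℝ} (hε : 0 < ε) :
    ∃ P : IntervalPartition s t, P.diamLE ε := by
  set m := ⌈(t - s) / ε⌉₊
  have hm : 0 < m := Nat.ceil_pos.2 (div_pos (by linarith) hε)
  refine ⟨uniform h m hm, fun i _ => ?_⟩
  have hm' : (0 : ℝ) < m := by exact_mod_cast hm
  have : (t - s) / ε ≤ m := Nat.le_ceil _
  simp only [uniform]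
  push_cast
  rw [show s + (i + 1) * ((t - s) / m) - (s + i * ((t - s) / m)) = (t - s) / m by ring,
    div_le_iff₀ hm']
  rw [div_le_iff₀ hε] at this
  linarith

end IntervalPartition

section Variation

open IntervalPartition

variable {n k : ℕ} (F : ℝ → En n → En k → Set (En n)) (xbar : ℝ → En n) (A : Set (En k))
  (δ : ℝ) {ε S s t : ℝ}

/-- The summand of `I^δ(𝒯)` contributed by an interval `[s, t]` of the partition. -/
def mvGap (s t : ℝ) : ℝ≥0∞ :=
  ⨆ x ∈ xbar '' Icc s t + closedBall (0 : En n) δ,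
    ⨆ a ∈ A, Metric.hausdorffEDist (F t x a) (F s x a)

lemma mvSum_single (h : S < t) : mvSum F xbar A δ (single h) = mvGap F xbar A δ S t :=
  Finset.sum_range_one _

lemma mvSum_extend (P : IntervalPartition S s) (h : s < t) :
    mvSum F xbar A δ (P.extend h) = mvSum F xbar A δ P + mvGap F xbar A δ s t := by
  rw [mvSum, show (P.extend h).N = P.N + 1 from rfl, Finset.sum_range_succ, mvSum,
    P.extend_pts_of_le h le_rfl, P.extend_pts_succ_N h, P.last]
  congr 1
  refine Finset.sum_congr rfl fun i hi => ?_
  have hi : i < P.N := Finset.mem_range.1 hi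
  rw [P.extend_pts_of_le h hi, P.extend_pts_of_le h hi.le]

@[simp]
lemma mvEtaEps_self : mvEtaEps F xbar A δ ε S S = 0 := by
  simp [mvEtaEps]

lemma mvEtaEps_add_mvGap_le (hε : 0 < ε) (hSs : S ≤ s) (hst : s < t) (hts : t - s ≤ ε) :
    mvEtaEps F xbar A δ ε S s + mvGap F xbar A δ s t ≤ mvEtaEps F xbar A δ ε S t := by
  rcases hSs.eq_or_lt with rfl | hSs
  · rw [mvEtaEps_self, zero_add, ← mvSum_single F xbar A δ hst]
    exact le_iSup₂_of_le (single hst) (diamLE_single hst hts) le_rfl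
  · rw [mvEtaEps, ENNReal.biSup_add' (exists_diamLE hSs hε)]
    refine iSup₂_le fun P hP => ?_
    rw [← mvSum_extend F xbar A δ P hst]
    exact le_iSup₂_of_le (P.extend hst) (diamLE_extend hP hst hts) le_rfl

lemma monotoneOn_mvEtaEps (hε : 0 < ε) : MonotoneOn (mvEtaEps F xbar A δ ε S) (Ici S) :=
  monotoneOn_Ici_of_le_of_sub_le hε fun _ _ hSs hst hts => by
    rcases hst.eq_or_lt with rfl | hst
    · exact le_rfl
    · exact le_self_add.trans (mvEtaEps_add_mvGap_le F xbar A δ hε hSs hst hts)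

lemma iSup_closedBall_le_mvGap {r : ℝ} (hr : r ∈ Icc s t) :
    ⨆ x ∈ closedBall (xbar r) δ, ⨆ a ∈ A, Metric.hausdorffEDist (F t x a) (F s x a)
      ≤ mvGap F xbar A δ s t := by
  refine biSup_mono fun x hx => ?_
  rw [← add_zero (xbar r), ← singleton_add_closedBall] at hx
  exact add_subset_add_right (singleton_subset_iff.2 (mem_image_of_mem xbar hr)) hx

lemma iSup_closedBall_le_mvEtaEps_sub {r : ℝ} (hε : 0 < ε) (hSs : S ≤ s) (hst : s < t)
    (hts : t - s ≤ ε) (hs : mvEtaEps F xbar A δ ε S s ≠ ⊤) (hr : r ∈ Icc s t) :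
    ⨆ x ∈ closedBall (xbar r) δ, ⨆ a ∈ A, Metric.hausdorffEDist (F t x a) (F s x a)
      ≤ mvEtaEps F xbar A δ ε S t - mvEtaEps F xbar A δ ε S s :=
  (iSup_closedBall_le_mvGap F xbar A δ hr).trans
    (ENNReal.le_sub_of_add_le_left hs (mvEtaEps_add_mvGap_le F xbar A δ hε hSs hst hts))

end Variation

theorem statement3_general {n k : ℕ} (F : ℝ → En n → En k → Set (En n))
    (xbar : ℝ → En n) (A : Set (En k)) (S T : ℝ)
    (δbar : ℝ) (hfin : mvEtaDelta F xbar A δbar S T < ⊤) :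
    ∃ 𝒜 : Set ℝ, 𝒜.Countable ∧ 𝒜 ⊆ Set.Ioo S T ∧
      ∀ t ∈ Set.Ioo S T \ 𝒜,
        Tendsto
          (fun t' => ⨆ x ∈ Metric.closedBall (xbar t) δbar, ⨆ a ∈ A,
            EMetric.hausdorffEdist (F t' x a) (F t x a))
          (𝓝[Set.Icc S T \ {t}] t) (𝓝 0) := by
  obtain ⟨ε, hε, hεT⟩ : ∃ ε > 0, mvEtaEps F xbar A δbar ε S T < ⊤ := by
    simpa [mvEtaDelta, iInf_lt_iff] using hfin
  set η := mvEtaEps F xbar A δbar ε S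
  have hmono := monotoneOn_mvEtaEps F xbar A δbar (S := S) hε
  have hη : ∀ u ∈ Icc S T, η u ≠ ⊤ := fun u hu =>
    ((hmono hu.1 (hu.1.trans hu.2) hu.2).trans_lt hεT).ne
  refine ⟨{t ∈ Icc S T | ¬ContinuousWithinAt η (Icc S T) t} ∩ Ioo S T,
    ((hmono.mono Icc_subset_Ici_self).countable_not_continuousWithinAt).mono inter_subset_left,
    inter_subset_right, fun t ⟨ht, hjump⟩ => ?_⟩
  have hcont : ContinuousWithinAt η (Icc S T) t := by
    by_contra h
    exact hjump ⟨⟨Ioo_subset_Icc_self ht, h⟩, ht⟩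
  refine tendsto_of_tendsto_of_tendsto_of_le_of_le' tendsto_const_nhds
    ((ENNReal.tendsto_sub_add_sub_of_continuousWithinAt hcont
      (hη t (Ioo_subset_Icc_self ht))).mono_left (nhdsWithin_mono _ sdiff_subset))
    (Eventually.of_forall fun _ => bot_le) ?_
  have hnear : ∀ᶠ t' in 𝓝[Icc S T \ {t}] t, t' ∈ Ioo (t - ε) (t + ε) :=
    mem_nhdsWithin_of_mem_nhds (Ioo_mem_nhds (by linarith) (by linarith))
  filter_upwards [hnear, self_mem_nhdsWithin] with t' ⟨hlo, hhi⟩ ⟨ht', hne⟩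
  rcases lt_or_gt_of_ne hne with hlt | hgt
  · -- `EMetric.hausdorffEdist` is a deprecated alias by definition, so it must be unfolded first
    simp only [EMetric.hausdorffEdist, Metric.hausdorffEDist_comm (s := F t' _ _) (t := F t _ _)]
    exact (iSup_closedBall_le_mvEtaEps_sub F xbar A δbar hε ht'.1 hlt (by linarith)
      (hη t' ht') ⟨hlt.le, le_rfl⟩).trans le_add_self
  · exact (iSup_closedBall_le_mvEtaEps_sub F xbar A δbar hε ht.1.le hgt (by linarith)
      (hη t (Ioo_subset_Icc_self ht)) ⟨le_rfl, hgt.le⟩).trans le_self_add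

/-- Under bounded variation along `x̄` uniformly over `A`,
`η^δ̄(T) < ∞`, (C1) and (C2), there is a countable set `𝒜 ⊆ (S,T)` such that for
every `t ∈ (S,T) \ 𝒜`,
`sup{ d_H(F(t',x,a), F(t,x,a)) : x ∈ x̄(t)+δ̄𝔹, a ∈ A } → 0` as `t' → t` in `[S,T]`. -/
theorem statement3 {n k : ℕ} (F : ℝ → En n → En k → Set (En n))
    (xbar : ℝ → En n) (A : Set (En k)) (S T : ℝ) (hST : S < T)
    (hA : IsCompact A) (hx : ContinuousOn xbar (Set.Icc S T))
    (hBV : HasBVAlongUniformly F xbar A S T)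
    (δbar : ℝ) (hδbar : 0 < δbar) (hfin : mvEtaDelta F xbar A δbar S T < ⊤)
    (hC1 : HypC1 F xbar A S T δbar) (hC2 : HypC2 F xbar A S T δbar) :
    ∃ 𝒜 : Set ℝ, 𝒜.Countable ∧ 𝒜 ⊆ Set.Ioo S T ∧
      ∀ t ∈ Set.Ioo S T \ 𝒜,
        Tendsto
          (fun t' => ⨆ x ∈ Metric.closedBall (xbar t) δbar, ⨆ a ∈ A,
            EMetric.hausdorffEdist (F t' x a) (F t x a))
          (𝓝[Set.Icc S T \ {t}] t) (𝓝 0) :=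
  statement3_general F xbar A S T δbar hfin

end
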